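/- The multiplicative monoid generated by the Möbius transformations P: x ↦ 1 + 1/x and M: x ↦ 1/(1+x) is free: no nontrivial relation holds between words in P and M. -/

import Mathlib

/-!
Apply a word product to the vector `(1, 1)`. Since `P (a, b) = (a + b, a)` and
`M (a, b) = (b, a + b)`, the image stays positive, and its first coordinate is larger,
smaller or equal to the second according as the word starts with `P`, starts with `M`, or
is empty. So the product determines the first letter; as `P` and `M` are invertible
(determinant `-1`), it can be cancelled, and induction on the word finishes.
-/

/-- The matrix of the Möbius transformation `P : x ↦ 1 + 1/x`. -/
def Pm : Matrix (Fin 2) (Fin 2) ℤ := !![1, 1; 1, 0]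

/-- The matrix of the Möbius transformation `M : x ↦ 1/(1+x)`. -/
def Mm : Matrix (Fin 2) (Fin 2) ℤ := !![0, 1; 1, 1]

/-- A letter of a word in the monoid generated by `P` and `M`. -/
def toMat (b : Bool) : Matrix (Fin 2) (Fin 2) ℤ := if b then Pm else Mm

/-- The product of a word in `P` and `M`. -/
def wordProd (w : List Bool) : Matrix (Fin 2) (Fin 2) ℤ := (w.map toMat).prod

open Matrix

lemma wordProd_cons (b : Bool) (w : List Bool) :
    wordProd (b :: w) = toMat b * wordProd w := by
  simp [wordProd]

lemma isUnit_toMat (b : Bool) : IsUnit (toMat b) := by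
  rw [isUnit_iff_isUnit_det]
  cases b <;> simp [toMat, Pm, Mm, det_fin_two]

lemma toMat_mulVec (b : Bool) (v : Fin 2 → ℤ) :
    toMat b *ᵥ v = if b then ![v 0 + v 1, v 0] else ![v 1, v 0 + v 1] := by
  ext i
  cases b <;> fin_cases i <;> simp [toMat, Pm, Mm, mulVec, dotProduct, Fin.sum_univ_two]

lemma wordProd_mulVec_one_pos (w : List Bool) (i : Fin 2) : 0 < (wordProd w *ᵥ 1) i := by
  induction w generalizing i with
  | nil => simp [wordProd]
  | cons b w ih =>
    have h₀ := ih 0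
    have h₁ := ih 1
    rw [wordProd_cons, ← mulVec_mulVec, toMat_mulVec]
    generalize wordProd w *ᵥ 1 = v at *
    cases b <;> fin_cases i <;>
      simp only [Bool.false_eq_true, ↓reduceIte, Fin.zero_eta, Fin.mk_one, cons_val_zero,
        cons_val_one, cons_val_fin_one] <;> omega

def headLetter (v : Fin 2 → ℤ) : Option Bool :=
  if v 1 < v 0 then some true else if v 0 < v 1 then some false else none

lemma headLetter_wordProd_mulVec_one (w : List Bool) :
    headLetter (wordProd w *ᵥ 1) = w.head? := by
  cases w with
  | nil => simp [wordProd, headLetter]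
  | cons b w =>
    have h₀ := wordProd_mulVec_one_pos w 0
    have h₁ := wordProd_mulVec_one_pos w 1
    rw [wordProd_cons, ← mulVec_mulVec, toMat_mulVec]
    generalize wordProd w *ᵥ 1 = v at *
    cases b <;> simp [headLetter, h₀, h₁, not_lt_of_gt h₀]

lemma head?_eq_of_wordProd_eq {w₁ w₂ : List Bool} (h : wordProd w₁ = wordProd w₂) :
    w₁.head? = w₂.head? := by
  rw [← headLetter_wordProd_mulVec_one, ← headLetter_wordProd_mulVec_one, h]

theorem monoid_PM_free : Function.Injective wordProd := by
  intro w₁ w₂ h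
  induction w₁ generalizing w₂ with
  | nil => exact (List.head?_eq_none_iff.mp (head?_eq_of_wordProd_eq h).symm).symm
  | cons b w₁ ih =>
    obtain ⟨w₂, rfl⟩ := List.head?_eq_some_iff.mp (head?_eq_of_wordProd_eq h).symm
    rw [wordProd_cons, wordProd_cons] at h
    exact congrArg (b :: ·) (ih ((isUnit_toMat b).mul_left_cancel h))
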